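/- arXiv:1909.07682 — 2 statements merged into one kernel-verified Lean document; each statement's English description precedes it below -/
import Mathlib

section
/- Suppose ψ^0,…,ψ^m ∈ C^∞(ℝⁿ×(ℝⁿ∖{0})) satisfy ψ^k(x,tξ) = (t^{m−k}/|t|)ψ^k(x,ξ) for t ≠ 0 and ⟨ξ,∂_x⟩ψ^k = −kψ^{k−1} (with ψ^{−1}=0). With ψ_{i₁…i_m} defined by the sum formula ψ_{i₁…i_m} = (1/m!) σ(i₁…i_m) Σ_{k=0}^{m} (−1)^k C(m,k) ∂^m ψ^k/∂x^{i₁}⋯∂x^{i_k}∂ξ^{i_{k+1}}⋯∂ξ^{i_m}, one has ψ_{i₁…i_m}(x,tξ) = (1/|t|)ψ_{i₁…i_m}(x,ξ) for t ≠ 0 and ⟨ξ,∂_x⟩ψ_{i₁…i_m} = 0, i.e. ψ_{i₁…i_m}(x+tξ,ξ) = ψ_{i₁…i_m}(x,ξ) for all real t. -/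
/-- Partial derivative in the `i`-th `x`-direction for functions of `(x,ξ) ∈ ℝⁿ×ℝⁿ`. -/
noncomputable def pdx (n : ℕ) (i : Fin n) (ψ : (Fin n → ℝ) × (Fin n → ℝ) → ℝ) :
    (Fin n → ℝ) × (Fin n → ℝ) → ℝ :=
  fun p => fderiv ℝ ψ p (Pi.single i 1, 0)

/-- Partial derivative in the `i`-th `ξ`-direction. -/
noncomputable def pdxi (n : ℕ) (i : Fin n) (ψ : (Fin n → ℝ) × (Fin n → ℝ) → ℝ) :
    (Fin n → ℝ) × (Fin n → ℝ) → ℝ :=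
  fun p => fderiv ℝ ψ p (0, Pi.single i 1)

/-- The operator `⟨ξ,∂ₓ⟩ = Σ_p ξ^p ∂/∂x^p`. -/
noncomputable def Dx (n : ℕ) (ψ : (Fin n → ℝ) × (Fin n → ℝ) → ℝ) :
    (Fin n → ℝ) × (Fin n → ℝ) → ℝ :=
  fun p => ∑ q : Fin n, p.2 q * pdx n q ψ p

/-- Mixed iterated derivative `∂^k/∂x^{j₁}…∂x^{j_q}∂ξ^{j_{q+1}}…∂ξ^{j_k}` along the
multi-index `I`: the first `q` slots are `x`-derivatives, the rest `ξ`-derivatives. -/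
noncomputable def mixedD (n k : ℕ) (q : ℕ) (I : Fin k → Fin n)
    (ψ : (Fin n → ℝ) × (Fin n → ℝ) → ℝ) : (Fin n → ℝ) × (Fin n → ℝ) → ℝ :=
  (List.finRange k).foldr
    (fun (a : Fin k) acc => if (a : ℕ) < q then pdx n (I a) acc else pdxi n (I a) acc) ψ

/-- Symmetrization (averaging over permutations) of a tensor-indexed family of functions. -/
noncomputable def symAvg (n k : ℕ)
    (T : (Fin k → Fin n) → (Fin n → ℝ) × (Fin n → ℝ) → ℝ) (I : Fin k → Fin n) :
    (Fin n → ℝ) × (Fin n → ℝ) → ℝ :=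
  fun p => ((Nat.factorial k : ℝ))⁻¹ * ∑ π : Equiv.Perm (Fin k), T (I ∘ π) p

/-- The John operator `J_{ij} = ∂²/∂x^i∂ξ^j − ∂²/∂x^j∂ξ^i`. -/
noncomputable def john (n : ℕ) (i j : Fin n) (ψ : (Fin n → ℝ) × (Fin n → ℝ) → ℝ) :
    (Fin n → ℝ) × (Fin n → ℝ) → ℝ :=
  fun p => pdx n i (pdxi n j ψ) p - pdx n j (pdxi n i ψ) p

/-- Iterated John operators `J_{i₁j₁}⋯J_{i_rj_r}`. -/
noncomputable def iterJohn (n r : ℕ) (I J : Fin r → Fin n)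
    (ψ : (Fin n → ℝ) × (Fin n → ℝ) → ℝ) : (Fin n → ℝ) × (Fin n → ℝ) → ℝ :=
  (List.finRange r).foldr (fun a acc => john n (I a) (J a) acc) ψ

/-- Formula (2.44): `ψ_{i₁…i_m} = (1/m!) σ(i₁…i_m) Σ_{k=0}^m (−1)^k C(m,k)
∂^m ψ^k/∂x^{i₁}⋯∂x^{i_k}∂ξ^{i_{k+1}}⋯∂ξ^{i_m}`. -/
noncomputable def psiTensor' (n m : ℕ) (ψ : ℕ → (Fin n → ℝ) × (Fin n → ℝ) → ℝ)
    (I : Fin m → Fin n) : (Fin n → ℝ) × (Fin n → ℝ) → ℝ :=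
  fun p => ((Nat.factorial m : ℝ))⁻¹ *
    symAvg n m (fun I' q =>
      ∑ k ∈ Finset.range (m + 1),
        (-1 : ℝ) ^ k * (m.choose k : ℝ) * mixedD n m k I' (ψ k) q) I p

namespace Stmt17Aux

variable {n : ℕ}

abbrev EE (n : ℕ) := (Fin n → ℝ) × (Fin n → ℝ)

def Om (n : ℕ) : Set (EE n) := {p | p.2 ≠ 0}

lemma isOpen_Om : IsOpen (Om n) := by
  have : Om n = Prod.snd ⁻¹' ({0}ᶜ) := rfl
  rw [this]
  exact isOpen_compl_singleton.preimage continuous_snd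

/-- directional derivative operator -/
noncomputable def dop (v : EE n) (χ : EE n → ℝ) : EE n → ℝ := fun p => fderiv ℝ χ p v

lemma pdx_eq (i : Fin n) (χ : EE n → ℝ) : pdx n i χ = dop (Pi.single i 1, 0) χ := rfl
lemma pdxi_eq (i : Fin n) (χ : EE n → ℝ) : pdxi n i χ = dop (0, Pi.single i 1) χ := rfl

lemma diffAt_of {χ : EE n → ℝ} (hχ : ContDiffOn ℝ (⊤ : ℕ∞) χ (Om n)) {p : EE n} (hp : p ∈ Om n) :
    DifferentiableAt ℝ χ p :=
  (hχ.contDiffAt (isOpen_Om.mem_nhds hp)).differentiableAt (by simp)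

lemma contDiffOn_dop (v : EE n) {χ : EE n → ℝ} (hχ : ContDiffOn ℝ (⊤ : ℕ∞) χ (Om n)) :
    ContDiffOn ℝ (⊤ : ℕ∞) (dop v χ) (Om n) :=
  (hχ.fderiv_of_isOpen isOpen_Om (by simp)).clm_apply contDiffOn_const

lemma dop_congr {f g : EE n → ℝ} (h : ∀ q ∈ Om n, f q = g q) {p : EE n} (hp : p ∈ Om n)
    (v : EE n) : dop v f p = dop v g p := by
  have h' : f =ᶠ[nhds p] g := Filter.eventually_of_mem (isOpen_Om.mem_nhds hp) h
  simp only [dop, h'.fderiv_eq]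

lemma dop_swap {χ : EE n → ℝ} (hχ : ContDiffOn ℝ (⊤ : ℕ∞) χ (Om n)) {p : EE n} (hp : p ∈ Om n)
    (v w : EE n) : dop v (dop w χ) p = dop w (dop v χ) p := by
  have hsym : IsSymmSndFDerivAt ℝ χ p :=
    (hχ.contDiffAt (isOpen_Om.mem_nhds hp)).isSymmSndFDerivAt (by rw [minSmoothness_of_isRCLikeNormedField]; exact WithTop.coe_le_coe.mpr le_top)
  have hd : ContDiffOn ℝ (⊤ : ℕ∞) (fderiv ℝ χ) (Om n) := hχ.fderiv_of_isOpen isOpen_Om (by simp)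
  have key : ∀ u z : EE n, dop u (dop z χ) p = fderiv ℝ (fderiv ℝ χ) p u z := by
    intro u z
    have hdd : DifferentiableAt ℝ (fderiv ℝ χ) p :=
      (hd.contDiffAt (isOpen_Om.mem_nhds hp)).differentiableAt (by simp)
    have h1 := fderiv_clm_apply hdd (differentiableAt_const z)
    simp only [dop]
    rw [show dop z χ = (fun y => (fderiv ℝ χ y) z) from rfl, h1]
    simp
  rw [key, key, hsym v w]




/-- vector attached to a slot -/
noncomputable def vOf (o : Bool × Fin n) : EE n :=
  if o.1 then (Pi.single o.2 1, 0) else (0, Pi.single o.2 1)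

/-- iterated application of slot derivatives -/
noncomputable def appD (L : List (Bool × Fin n)) (χ : EE n → ℝ) : EE n → ℝ :=
  L.foldr (fun o acc => dop (vOf o) acc) χ

@[simp] lemma appD_nil (χ : EE n → ℝ) : appD ([] : List (Bool × Fin n)) χ = χ := rfl

@[simp] lemma appD_cons (o : Bool × Fin n) (L : List (Bool × Fin n)) (χ : EE n → ℝ) :
    appD (o :: L) χ = dop (vOf o) (appD L χ) := rfl

lemma mixedD_eq_appD (m k : ℕ) (J : Fin m → Fin n) (χ : EE n → ℝ) :
    mixedD n m k J χ = appD (List.map (fun a : Fin m => (decide ((a : ℕ) < k), J a)) (List.finRange m)) χ := by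
  unfold mixedD appD
  rw [List.foldr_map]
  congr 1
  funext a acc
  by_cases h : (a : ℕ) < k <;> simp [h, vOf, pdx_eq, pdxi_eq]

lemma contDiffOn_appD (L : List (Bool × Fin n)) {χ : EE n → ℝ}
    (hχ : ContDiffOn ℝ (⊤ : ℕ∞) χ (Om n)) : ContDiffOn ℝ (⊤ : ℕ∞) (appD L χ) (Om n) := by
  induction L with
  | nil => exact hχ
  | cons o L ih => exact contDiffOn_dop _ ih

lemma appD_congr {f g : EE n → ℝ} (L : List (Bool × Fin n)) (h : ∀ q ∈ Om n, f q = g q) :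
    ∀ p ∈ Om n, appD L f p = appD L g p := by
  induction L with
  | nil => exact h
  | cons o L ih =>
    intro p hp
    simp only [appD_cons]
    exact dop_congr ih hp _

lemma appD_perm {χ : EE n → ℝ} (hχ : ContDiffOn ℝ (⊤ : ℕ∞) χ (Om n)) {L L' : List (Bool × Fin n)}
    (hLL' : L.Perm L') : ∀ p ∈ Om n, appD L χ p = appD L' χ p := by
  induction hLL' with
  | nil => intro p _; rfl
  | cons o _ ih =>
    intro p hp
    simp only [appD_cons]
    exact dop_congr ih hp _
  | swap o o' L =>
    intro p hp
    simp only [appD_cons]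
    exact dop_swap (contDiffOn_appD L hχ) hp _ _
  | trans _ _ ih1 ih2 =>
    intro p hp
    exact (ih1 p hp).trans (ih2 p hp)

lemma appD_const_mul (L : List (Bool × Fin n)) {χ : EE n → ℝ}
    (hχ : ContDiffOn ℝ (⊤ : ℕ∞) χ (Om n)) (c : ℝ) :
    ∀ p ∈ Om n, appD L (fun q => c * χ q) p = c * appD L χ p := by
  induction L with
  | nil => intro p _; rfl
  | cons o L ih =>
    intro p hp
    simp only [appD_cons]
    rw [dop_congr ih hp]
    simp only [dop]
    rw [fderiv_const_mul (diffAt_of (contDiffOn_appD L hχ) hp) c]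
    simp




/-- signed homogeneity of degree `d` in the `ξ` variable -/
def HomDeg (d : ℤ) (χ : EE n → ℝ) : Prop :=
  ∀ t : ℝ, t ≠ 0 → ∀ p ∈ Om n, χ (p.1, t • p.2) = (t ^ d / |t|) * χ p

noncomputable def Mt (n : ℕ) (t : ℝ) : EE n →L[ℝ] EE n :=
  (ContinuousLinearMap.fst ℝ _ _).prod (t • ContinuousLinearMap.snd ℝ _ _)

@[simp] lemma Mt_apply (t : ℝ) (q : EE n) : Mt n t q = (q.1, t • q.2) := rfl

lemma mem_Om_smul {t : ℝ} (ht : t ≠ 0) {p : EE n} (hp : p ∈ Om n) :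
    ((p.1, t • p.2) : EE n) ∈ Om n := smul_ne_zero ht hp

lemma fderiv_hom {χ : EE n → ℝ} (hχ : ContDiffOn ℝ (⊤ : ℕ∞) χ (Om n)) {d : ℤ} (hh : HomDeg d χ)
    {t : ℝ} (ht : t ≠ 0) {p : EE n} (hp : p ∈ Om n) (v : EE n) :
    fderiv ℝ χ (p.1, t • p.2) (v.1, t • v.2) = (t ^ d / |t|) * fderiv ℝ χ p v := by
  have hMp : ((p.1, t • p.2) : EE n) ∈ Om n := mem_Om_smul ht hp
  have hfeq : (fun q => χ (Mt n t q)) =ᶠ[nhds p] (fun q => (t ^ d / |t|) * χ q) :=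
    Filter.eventually_of_mem (isOpen_Om.mem_nhds hp) (fun q hq => hh t ht q hq)
  have h1 : fderiv ℝ (fun q => χ (Mt n t q)) p = (fderiv ℝ χ (Mt n t p)).comp (Mt n t) := by
    have hc : HasFDerivAt (χ ∘ Mt n t) ((fderiv ℝ χ (Mt n t p)).comp (Mt n t)) p :=
      HasFDerivAt.comp p (diffAt_of hχ hMp).hasFDerivAt (Mt n t).hasFDerivAt
    exact hc.fderiv
  have h2 : fderiv ℝ (fun q => (t ^ d / |t|) * χ q) p = (t ^ d / |t|) • fderiv ℝ χ p :=
    fderiv_const_mul (diffAt_of hχ hp) _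
  have h3 := hfeq.fderiv_eq (𝕜 := ℝ)
  rw [h1, h2] at h3
  have h4 := congrArg (fun (L : EE n →L[ℝ] ℝ) => L v) h3
  simpa using h4

lemma homDeg_dop_x {χ : EE n → ℝ} (hχ : ContDiffOn ℝ (⊤ : ℕ∞) χ (Om n)) {d : ℤ} (hh : HomDeg d χ)
    (u : Fin n → ℝ) : HomDeg d (dop (u, 0) χ) := by
  intro t ht p hp
  have := fderiv_hom hχ hh ht hp (u, 0)
  simpa [dop, smul_zero] using this

lemma homDeg_dop_xi {χ : EE n → ℝ} (hχ : ContDiffOn ℝ (⊤ : ℕ∞) χ (Om n)) {d : ℤ} (hh : HomDeg d χ)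
    (u : Fin n → ℝ) : HomDeg (d - 1) (dop (0, u) χ) := by
  intro t ht p hp
  have h := fderiv_hom hχ hh ht hp (0, u)
  have h2 : fderiv ℝ χ (p.1, t • p.2) (0, t • u) = t * fderiv ℝ χ (p.1, t • p.2) (0, u) := by
    rw [show ((0, t • u) : EE n) = t • ((0 : Fin n → ℝ), u) by simp [Prod.smul_mk], map_smul]
    simp
  rw [h2] at h
  have : fderiv ℝ χ (p.1, t • p.2) (0, u) = (t ^ d / |t|) / t * fderiv ℝ χ p (0, u) := by
    field_simp at h ⊢
    linarith [h]
  simp only [dop, Mt_apply] at this ⊢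
  rw [this, zpow_sub_one₀ ht]
  ring

lemma homDeg_appD {χ : EE n → ℝ} (hχ : ContDiffOn ℝ (⊤ : ℕ∞) χ (Om n)) {d : ℤ} (hh : HomDeg d χ)
    (L : List (Bool × Fin n)) :
    HomDeg (d - (L.countP (fun o => !o.1) : ℤ)) (appD L χ) := by
  induction L with
  | nil => simpa using hh
  | cons o L ih =>
    rcases o with ⟨b, i⟩
    cases b
    · have h := homDeg_dop_xi (contDiffOn_appD L hχ) ih (Pi.single i 1)
      have : ((((false, i) :: L).countP (fun o => !o.1)) : ℤ)
          = ((L.countP (fun o => !o.1)) : ℤ) + 1 := by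
        rw [List.countP_cons]
        simp
      rw [this]
      have e : appD ((false, i) :: L) χ = dop (0, Pi.single i 1) (appD L χ) := rfl
      rw [e, show d - (((L.countP (fun o => !o.1)) : ℤ) + 1)
          = (d - (L.countP (fun o => !o.1) : ℤ)) - 1 by ring]
      exact h
    · have h := homDeg_dop_x (contDiffOn_appD L hχ) ih (Pi.single i 1)
      have : ((((true, i) :: L).countP (fun o => !o.1)) : ℤ)
          = ((L.countP (fun o => !o.1)) : ℤ) := by
        rw [List.countP_cons]
        simp
      rw [this]
      exact h




noncomputable def cxi (r : Fin n) : EE n →L[ℝ] ℝ :=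
  (ContinuousLinearMap.proj r).comp (ContinuousLinearMap.snd ℝ _ _)

@[simp] lemma cxi_apply (r : Fin n) (q : EE n) : cxi r q = q.2 r := rfl

lemma Dx_eq (f : EE n → ℝ) (p : EE n) :
    Dx n f p = ∑ r, p.2 r * dop (Pi.single r 1, 0) f p := rfl

lemma Dx_smooth {f : EE n → ℝ} (hf : ContDiffOn ℝ (⊤ : ℕ∞) f (Om n)) :
    ContDiffOn ℝ (⊤ : ℕ∞) (Dx n f) (Om n) := by
  have : Dx n f = fun p => ∑ r : Fin n, cxi r p * dop (Pi.single r 1, 0) f p := rfl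
  rw [this]
  exact ContDiffOn.sum fun r _ =>
    ((cxi r).contDiff.contDiffOn).mul (contDiffOn_dop _ hf)

lemma sum_single_vec (u : Fin n → ℝ) :
    ∑ r, u r • ((Pi.single r 1, 0) : EE n) = ((u, 0) : EE n) := by
  apply Prod.ext
  · rw [Prod.fst_sum]
    funext x
    simp [Finset.sum_apply, Pi.single_apply, mul_ite, Finset.sum_ite_eq]
  · rw [Prod.snd_sum]
    simp

lemma Dx_dop {f : EE n → ℝ} (hf : ContDiffOn ℝ (⊤ : ℕ∞) f (Om n)) {p : EE n} (hp : p ∈ Om n)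
    (v : EE n) : Dx n (dop v f) p = dop v (Dx n f) p - dop (v.2, 0) f p := by
  have hdiff : ∀ r : Fin n,
      DifferentiableAt ℝ (fun q : EE n => q.2 r * dop (Pi.single r 1, 0) f q) p := by
    intro r
    exact ((cxi r).differentiable.differentiableAt).mul
      (diffAt_of (contDiffOn_dop _ hf) hp)
  have h0 : dop v (Dx n f) p
      = ∑ r : Fin n, fderiv ℝ (fun q : EE n => q.2 r * dop (Pi.single r 1, 0) f q) p v := by
    rw [show dop v (Dx n f) p
        = fderiv ℝ (fun q : EE n => ∑ r : Fin n, q.2 r * dop (Pi.single r 1, 0) f q) p v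
        from rfl]
    rw [fderiv_fun_sum (fun r _ => hdiff r)]
    simp
  have h1 : ∀ r : Fin n, fderiv ℝ (fun q : EE n => q.2 r * dop (Pi.single r 1, 0) f q) p v
      = p.2 r * dop v (dop (Pi.single r 1, 0) f) p + dop (Pi.single r 1, 0) f p * v.2 r := by
    intro r
    have hc : DifferentiableAt ℝ (fun q : EE n => q.2 r) p :=
      (cxi r).differentiable.differentiableAt
    rw [fderiv_fun_mul hc (diffAt_of (contDiffOn_dop _ hf) hp)]
    have hcx : fderiv ℝ (fun q : EE n => q.2 r) p = cxi r := (cxi r).fderiv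
    simp [hcx, dop]
  have h2 : ∑ r : Fin n, dop (Pi.single r 1, 0) f p * v.2 r = dop (v.2, 0) f p := by
    simp only [dop]
    rw [show ((v.2, (0 : Fin n → ℝ)) : EE n) = ∑ r, v.2 r • ((Pi.single r 1, 0) : EE n) from
      (sum_single_vec v.2).symm]
    rw [map_sum]
    refine Finset.sum_congr rfl fun x _ => ?_
    rw [map_smul]
    simp [mul_comm]
  have h3 : ∀ r : Fin n, dop v (dop (Pi.single r 1, 0) f) p
      = dop (Pi.single r 1, 0) (dop v f) p := fun r => dop_swap hf hp _ _
  rw [h0]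
  simp only [h1]
  rw [Finset.sum_add_distrib, h2, Dx_eq]
  simp only [h3]
  ring




lemma dop_zero_vec (f : EE n → ℝ) (p : EE n) : dop (0 : EE n) f p = 0 := by simp [dop]

lemma fin_sum_cons {α : Type*} {M : Type*} [AddCommMonoid M] (a : α) (l : List α)
    (f : Fin ((a :: l).length) → M) :
    ∑ j, f j = f ⟨0, by simp⟩ + ∑ j : Fin l.length, f ⟨(j : ℕ) + 1, by simp⟩ :=
  Fin.sum_univ_succ f

lemma Dx_appD {χ : EE n → ℝ} (hχ : ContDiffOn ℝ (⊤ : ℕ∞) χ (Om n)) (L : List (Bool × Fin n)) :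
    ∀ p ∈ Om n, Dx n (appD L χ) p = appD L (Dx n χ) p
      - ∑ j : Fin L.length,
          (if (L.get j).1 then 0 else appD (L.set j (true, (L.get j).2)) χ p) := by
  induction L with
  | nil => intro p _; simp
  | cons o L ih =>
    intro p hp
    obtain ⟨b, i⟩ := o
    have hL : ContDiffOn ℝ (⊤ : ℕ∞) (appD L χ) (Om n) := contDiffOn_appD L hχ
    have hsetdiff : ∀ j : Fin L.length,
        DifferentiableAt ℝ (fun q => if (L.get j).1 then (0:ℝ)
          else appD (L.set j (true, (L.get j).2)) χ q) p := by
      intro j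
      by_cases h : (L.get j).1 = true
      · simp only [if_pos h]
        exact differentiableAt_const 0
      · simp only [if_neg h]
        exact diffAt_of (contDiffOn_appD _ hχ) hp
    have hsumdiff : DifferentiableAt ℝ (fun q => ∑ j : Fin L.length,
        (if (L.get j).1 then (0:ℝ) else appD (L.set j (true, (L.get j).2)) χ q)) p :=
      DifferentiableAt.fun_sum fun j _ => hsetdiff j
    have hAdiff : DifferentiableAt ℝ (appD L (Dx n χ)) p :=
      diffAt_of (contDiffOn_appD L (Dx_smooth hχ)) hp
    rw [appD_cons, Dx_dop hL hp (vOf (b, i))]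
    have step1 : dop (vOf (b, i)) (Dx n (appD L χ)) p
        = dop (vOf (b, i)) (fun q => appD L (Dx n χ) q - ∑ j : Fin L.length,
            (if (L.get j).1 then (0:ℝ) else appD (L.set j (true, (L.get j).2)) χ q)) p :=
      dop_congr ih hp _
    have step2 : dop (vOf (b, i)) (fun q => appD L (Dx n χ) q - ∑ j : Fin L.length,
            (if (L.get j).1 then (0:ℝ) else appD (L.set j (true, (L.get j).2)) χ q)) p
        = dop (vOf (b, i)) (appD L (Dx n χ)) p - ∑ j : Fin L.length,
            (if (L.get j).1 then (0:ℝ)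
              else dop (vOf (b, i)) (appD (L.set j (true, (L.get j).2)) χ) p) := by
      simp only [dop]
      rw [fderiv_fun_sub hAdiff hsumdiff]
      rw [fderiv_fun_sum (fun j _ => hsetdiff j)]
      simp only [ContinuousLinearMap.sub_apply, ContinuousLinearMap.sum_apply]
      congr 1
      refine Finset.sum_congr rfl fun j _ => ?_
      by_cases h : (L.get j).1 = true
      · rw [if_pos h]
        rw [show (fun q => if (L.get j).1 = true then (0:ℝ)
            else appD (L.set ↑j (true, (L.get j).2)) χ q) = fun _ => (0:ℝ) by
          funext q; rw [if_pos h]]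
        simp
      · rw [if_neg h]
        rw [show (fun q => if (L.get j).1 = true then (0:ℝ)
            else appD (L.set ↑j (true, (L.get j).2)) χ q)
            = appD (L.set ↑j (true, (L.get j).2)) χ by
          funext q; rw [if_neg h]]
    rw [step1, step2]
    have hhead : dop ((vOf (b, i)).2, 0) (appD L χ) p
        = (if b then (0:ℝ) else appD ((true, i) :: L) χ p) := by
      cases b
      · simp only [vOf, Bool.false_eq_true, if_false]
        rfl
      · simp only [vOf, if_true]
        rw [show (((Pi.single i 1, 0) : EE n).2, (0 : Fin n → ℝ)) = (0 : EE n) from rfl]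
        simp [dop_zero_vec]
    have hsplit : ∑ j : Fin ((b, i) :: L).length,
        (if (((b, i) :: L).get j).1 then (0:ℝ)
          else appD (((b, i) :: L).set j (true, (((b, i) :: L).get j).2)) χ p)
        = (if b then (0:ℝ) else appD ((true, i) :: L) χ p)
          + ∑ j : Fin L.length, (if (L.get j).1 then (0:ℝ)
              else dop (vOf (b, i)) (appD (L.set j (true, (L.get j).2)) χ) p) := by
      rw [fin_sum_cons]
      congr 1
    rw [hsplit, ← hhead]
    simp only [appD_cons]
    ring



/-- the slot list of `mixedD` -/
noncomputable def Lmap (m k : ℕ) (J : Fin m → Fin n) : List (Bool × Fin n) :=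
  List.map (fun a : Fin m => (decide ((a : ℕ) < k), J a)) (List.finRange m)

lemma mixedD_eq_appD_Lmap (m k : ℕ) (J : Fin m → Fin n) (χ : EE n → ℝ) :
    mixedD n m k J χ = appD (Lmap m k J) χ := mixedD_eq_appD m k J χ

@[simp] lemma Lmap_length (m k : ℕ) (J : Fin m → Fin n) : (Lmap m k J).length = m := by
  simp [Lmap]

lemma Lmap_get (m k : ℕ) (J : Fin m → Fin n) (j : Fin (Lmap m k J).length) :
    (Lmap m k J).get j = (decide (((j : ℕ)) < k), J ⟨(j : ℕ), by
      have := j.2; simpa using this⟩) := by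
  rw [List.get_eq_getElem]; simp [Lmap]

lemma map_perm_finRange (m : ℕ) {β : Type*} (f : Fin m → β) (τ : Equiv.Perm (Fin m)) :
    (List.map (fun a => f (τ a)) (List.finRange m)).Perm (List.map f (List.finRange m)) := by
  have h1 : (List.map (fun a => f (τ a)) (List.finRange m))
      = List.map f (List.map τ (List.finRange m)) := by
    rw [List.map_map]; rfl
  rw [h1]
  exact List.Perm.map f (Equiv.Perm.map_finRange_perm τ)

/-- flipping a `ξ`-slot `j ≥ k` to an `x`-slot gives, up to permutation,
the slot list with `k+1` `x`-slots and reindexed multi-index. -/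
lemma Lmap_set_perm (m k : ℕ) (J : Fin m → Fin n) (j : Fin m) (hjk : ¬ ((j : ℕ) < k))
    (hkm : k < m) :
    ((Lmap m k J).set (j : ℕ) (true, J j)).Perm
      (Lmap m (k + 1) (fun a => J ((Equiv.swap j ⟨k, hkm⟩) a))) := by
  set τ : Equiv.Perm (Fin m) := Equiv.swap j ⟨k, hkm⟩ with hτ
  have hset : (Lmap m k J).set (j : ℕ) (true, J j)
      = List.map (fun a : Fin m => ((decide ((a : ℕ) < k) || decide (a = j)), J a))
          (List.finRange m) := by
    apply List.ext_getElem
    · simp [Lmap]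
    · intro i h1 h2
      have him : i < m := by simpa using h2
      rw [List.getElem_set]
      simp only [Lmap, List.getElem_map, List.getElem_finRange]
      by_cases hij : (j : ℕ) = i
      · rw [if_pos hij]
        have : (Fin.cast (List.length_finRange (n := m)) ⟨i, by simpa using h1⟩ : Fin m) = j := by
          apply Fin.ext; simp [← hij]
        rw [this]
        simp [hjk]
      · rw [if_neg hij]
        have hne : ¬ (((⟨i, him⟩ : Fin m)) = j) := by
          intro hc
          exact hij (by rw [← hc])
        simp [hne]
  rw [hset]
  have hbool : ∀ a : Fin m,
      ((decide ((a : ℕ) < k) || decide (a = j)))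
        = decide (((τ a : Fin m) : ℕ) < k + 1) := by
    intro a
    rw [Bool.eq_iff_iff]
    simp only [Bool.or_eq_true, decide_eq_true_eq]
    rw [hτ, Equiv.swap_apply_def]
    have hjv : k ≤ (j : ℕ) := by omega
    split_ifs with h1 h2
    · subst h1
      simp
    · constructor
      · rintro (h | h)
        · exfalso; rw [h2] at h; simp at h
        · exact absurd h h1
      · intro h
        exfalso
        exact h1 (h2.trans (Fin.ext (by simp; omega)))
    · have hak : (a : ℕ) ≠ k := fun hc => h2 (Fin.ext (by simpa using hc))
      constructor
      · rintro (h | h)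
        · omega
        · exact absurd h h1
      · intro h
        left
        omega
  have hfun : (fun a : Fin m => ((decide ((a : ℕ) < k) || decide (a = j)), J a))
      = fun a : Fin m => ((decide (((τ a : Fin m) : ℕ) < k + 1), J (τ (τ a)))) := by
    funext a
    have hinv : τ (τ a) = a := Equiv.swap_apply_self _ _ _
    rw [hinv, hbool a]
  rw [hfun]
  exact map_perm_finRange m (fun a => (decide ((a : ℕ) < k + 1), J (τ a))) τ


lemma dop_sumc {ι : Type*} (v : EE n) {p : EE n} {s : Finset ι} {F : ι → EE n → ℝ}
    (hF : ∀ i ∈ s, DifferentiableAt ℝ (F i) p) (c : ι → ℝ) :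
    dop v (fun q => ∑ i ∈ s, c i * F i q) p = ∑ i ∈ s, c i * dop v (F i) p := by
  simp only [dop]
  rw [fderiv_fun_sum (fun i hi => (hF i hi).const_mul (c i))]
  rw [ContinuousLinearMap.sum_apply]
  refine Finset.sum_congr rfl fun i hi => ?_
  rw [fderiv_const_mul (hF i hi) (c i)]
  simp

lemma Dx_sumc {ι : Type*} {p : EE n} {s : Finset ι} {F : ι → EE n → ℝ}
    (hF : ∀ i ∈ s, DifferentiableAt ℝ (F i) p) (c : ι → ℝ) :
    Dx n (fun q => ∑ i ∈ s, c i * F i q) p = ∑ i ∈ s, c i * Dx n (F i) p := by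
  rw [Dx_eq]
  have : ∀ r : Fin n, dop (Pi.single r 1, 0) (fun q => ∑ i ∈ s, c i * F i q) p
      = ∑ i ∈ s, c i * dop (Pi.single r 1, 0) (F i) p := fun r => dop_sumc _ hF c
  simp only [this]
  simp_rw [Finset.mul_sum]
  rw [Finset.sum_comm]
  refine Finset.sum_congr rfl fun i _ => ?_
  rw [Dx_eq, Finset.mul_sum]
  refine Finset.sum_congr rfl fun r _ => ?_
  ring

lemma countP_range (k : ℕ) : ∀ m : ℕ, (List.range m).countP (fun i => !decide (i < k)) = m - k := by
  intro m
  induction m with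
  | zero => simp
  | succ m ih =>
    rw [List.range_succ, List.countP_append, ih]
    by_cases h : m < k
    · simp [h]; omega
    · simp [h]; omega

lemma Lmap_countP (m k : ℕ) (J : Fin m → Fin n) :
    ((Lmap m k J).countP (fun o => !o.1)) = m - k := by
  unfold Lmap
  rw [List.countP_map]
  have h1 : ((fun (o : Bool × Fin n) => !o.1) ∘ (fun a : Fin m => (decide ((a : ℕ) < k), J a)))
      = (fun i : ℕ => !decide (i < k)) ∘ Fin.val := rfl
  rw [h1, ← List.countP_map, List.map_coe_finRange_eq_range, countP_range]

lemma sum_ite_lt (m k : ℕ) (c : ℝ) :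
    (∑ j : Fin m, if (j : ℕ) < k then (0:ℝ) else c) = ((m - k : ℕ) : ℝ) * c := by
  rw [Fin.sum_univ_eq_sum_range (fun i => if i < k then (0:ℝ) else c) m]
  induction m with
  | zero => simp
  | succ m ih =>
    rw [Finset.sum_range_succ, ih]
    by_cases h : m < k
    · rw [if_pos h, show m + 1 - k = 0 by omega, show m - k = 0 by omega]
      simp
    · rw [if_neg h, show m + 1 - k = (m - k) + 1 by omega]
      push_cast
      ring


lemma Dx_sum0 {ι : Type*} {p : EE n} {s : Finset ι} {F : ι → EE n → ℝ}
    (hF : ∀ i ∈ s, DifferentiableAt ℝ (F i) p) :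
    Dx n (fun q => ∑ i ∈ s, F i q) p = ∑ i ∈ s, Dx n (F i) p := by
  have h : (fun q => ∑ i ∈ s, F i q) = (fun q => ∑ i ∈ s, (1:ℝ) * F i q) := by simp
  rw [h, Dx_sumc hF (fun _ => (1:ℝ))]
  simp

lemma key_term (m : ℕ) (ψ : ℕ → EE n → ℝ) (hψsm : ∀ k ≤ m, ContDiffOn ℝ (⊤ : ℕ∞) (ψ k) (Om n))
    (hψDx : ∀ k ≤ m, ∀ q ∈ Om n, Dx n (ψ k) q = -(k : ℝ) * ψ (k - 1) q)
    {p : EE n} (hp : p ∈ Om n) (J : Fin m → Fin n) (k : ℕ) (hk : k ≤ m) :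
    Dx n (appD (Lmap m k J) (ψ k)) p
      = -(k : ℝ) * appD (Lmap m k J) (ψ (k - 1)) p
        - ∑ j : Fin m, (if h : (j : ℕ) < k then (0:ℝ)
            else appD (Lmap m (k + 1)
              (fun a => J ((Equiv.swap j ⟨k, lt_of_le_of_lt (Nat.not_lt.1 h) j.isLt⟩) a)))
              (ψ k) p) := by
  rw [Dx_appD (hψsm k hk) (Lmap m k J) p hp]
  congr 1
  · have h1 : appD (Lmap m k J) (Dx n (ψ k)) p
        = appD (Lmap m k J) (fun q => -(k : ℝ) * ψ (k - 1) q) p :=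
      appD_congr _ (fun q hq => hψDx k hk q hq) p hp
    rw [h1]
    exact appD_const_mul _ (hψsm (k - 1) (le_trans (Nat.sub_le k 1) hk)) _ p hp
  · have hlen : (Lmap m k J).length = m := Lmap_length m k J
    rw [← Equiv.sum_comp (finCongr hlen.symm)
      (fun j => if ((Lmap m k J).get j).1 = true then (0:ℝ)
        else appD ((Lmap m k J).set (j : ℕ) (true, ((Lmap m k J).get j).2)) (ψ k) p)]
    refine Finset.sum_congr rfl fun j _ => ?_
    have hget : (Lmap m k J).get (finCongr hlen.symm j) = (decide ((j : ℕ) < k), J j) := by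
      rw [Lmap_get]
      congr 1
    by_cases hj : (j : ℕ) < k
    · rw [dif_pos hj]
      rw [if_pos (by rw [hget]; simpa using hj)]
    · rw [dif_neg hj]
      rw [if_neg (by rw [hget]; simpa using hj)]
      have hkm : k < m := lt_of_le_of_lt (Nat.not_lt.1 hj) j.isLt
      have hcoe : ((finCongr hlen.symm j : Fin (Lmap m k J).length) : ℕ) = (j : ℕ) := by simp
      have hsnd : ((Lmap m k J).get (finCongr hlen.symm j)).2 = J j := by rw [hget]
      rw [hsnd, hcoe]
      exact appD_perm (hψsm k hk) (Lmap_set_perm m k J j hj hkm) p hp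

lemma Dx_Phi (m : ℕ) (ψ : ℕ → EE n → ℝ) (I : Fin m → Fin n)
    (hψsm : ∀ k ≤ m, ContDiffOn ℝ (⊤ : ℕ∞) (ψ k) (Om n))
    (hψDx : ∀ k ≤ m, ∀ q ∈ Om n, Dx n (ψ k) q = -(k : ℝ) * ψ (k - 1) q)
    {p : EE n} (hp : p ∈ Om n) :
    Dx n (fun q => ∑ π : Equiv.Perm (Fin m), ∑ k ∈ Finset.range (m + 1),
      (-1:ℝ) ^ k * (m.choose k : ℝ) * appD (Lmap m k (fun a => I (π a))) (ψ k) q) p = 0 := by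
  have hkle : ∀ k ∈ Finset.range (m + 1), k ≤ m := fun k hk => Nat.lt_succ_iff.1 (Finset.mem_range.1 hk)
  have hFdiff : ∀ (π : Equiv.Perm (Fin m)) (k : ℕ), k ≤ m →
      DifferentiableAt ℝ (appD (Lmap m k (fun a => I (π a))) (ψ k)) p :=
    fun π k hk => diffAt_of (contDiffOn_appD _ (hψsm k hk)) hp
  have hGdiff : ∀ π : Equiv.Perm (Fin m), DifferentiableAt ℝ
      (fun q => ∑ k ∈ Finset.range (m + 1),
        (-1:ℝ) ^ k * (m.choose k : ℝ) * appD (Lmap m k (fun a => I (π a))) (ψ k) q) p :=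
    fun π => DifferentiableAt.fun_sum fun k hk => ((hFdiff π k (hkle k hk)).const_mul _)
  rw [Dx_sum0 (fun π _ => hGdiff π)]
  have h1 : ∀ π : Equiv.Perm (Fin m),
      Dx n (fun q => ∑ k ∈ Finset.range (m + 1),
        (-1:ℝ) ^ k * (m.choose k : ℝ) * appD (Lmap m k (fun a => I (π a))) (ψ k) q) p
      = ∑ k ∈ Finset.range (m + 1), (-1:ℝ) ^ k * (m.choose k : ℝ)
          * Dx n (appD (Lmap m k (fun a => I (π a))) (ψ k)) p :=
    fun π => Dx_sumc (fun k hk => hFdiff π k (hkle k hk)) _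
  simp only [h1]
  rw [Finset.sum_comm]
  -- now: ∑ k ∈ range (m+1), ∑ π, c k * Dx n (F k π) p = 0
  have h2 : ∀ k ∈ Finset.range (m + 1), ∀ π : Equiv.Perm (Fin m),
      Dx n (appD (Lmap m k (fun a => I (π a))) (ψ k)) p
        = -(k : ℝ) * appD (Lmap m k (fun a => I (π a))) (ψ (k - 1)) p
          - ∑ j : Fin m, (if h : (j : ℕ) < k then (0:ℝ)
              else appD (Lmap m (k + 1)
                (fun a => I (π ((Equiv.swap j ⟨k, lt_of_le_of_lt (Nat.not_lt.1 h) j.isLt⟩) a))))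
                (ψ k) p) :=
    fun k hk π => key_term m ψ hψsm hψDx hp (fun a => I (π a)) k (hkle k hk)
  -- define the π-summed quantities
  set B : ℕ → ℝ := fun k => ∑ π : Equiv.Perm (Fin m),
    appD (Lmap m (k + 1) (fun a => I (π a))) (ψ k) p with hB
  have h3 : ∀ k, k ≤ m → ∑ π : Equiv.Perm (Fin m),
      (∑ j : Fin m, (if h : (j : ℕ) < k then (0:ℝ)
        else appD (Lmap m (k + 1)
          (fun a => I (π ((Equiv.swap j ⟨k, lt_of_le_of_lt (Nat.not_lt.1 h) j.isLt⟩) a))))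
          (ψ k) p))
      = ((m - k : ℕ) : ℝ) * B k := by
    intro k hk
    rw [Finset.sum_comm]
    have hj3 : ∀ j : Fin m,
        (∑ π : Equiv.Perm (Fin m), (if h : (j : ℕ) < k then (0:ℝ)
          else appD (Lmap m (k + 1)
            (fun a => I (π ((Equiv.swap j ⟨k, lt_of_le_of_lt (Nat.not_lt.1 h) j.isLt⟩) a))))
            (ψ k) p))
        = (if (j : ℕ) < k then (0:ℝ) else B k) := by
      intro j
      by_cases hj : (j : ℕ) < k
      · simp only [dif_pos hj, if_pos hj, Finset.sum_const, smul_zero]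
      · simp only [dif_neg hj, if_neg hj]
        have hkm : k < m := lt_of_le_of_lt (Nat.not_lt.1 hj) j.isLt
        rw [hB]
        exact Equiv.sum_comp (Equiv.mulRight (Equiv.swap j ⟨k, hkm⟩))
          (fun π => appD (Lmap m (k + 1) (fun a => I (π a))) (ψ k) p) |>.symm ▸ rfl
    simp only [hj3]
    exact sum_ite_lt m k (B k)
  set A : ℕ → ℝ := fun k => ∑ π : Equiv.Perm (Fin m),
    appD (Lmap m k (fun a => I (π a))) (ψ (k - 1)) p with hA
  have h4 : ∀ k ∈ Finset.range (m + 1),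
      (∑ π : Equiv.Perm (Fin m), (-1:ℝ) ^ k * (m.choose k : ℝ)
        * Dx n (appD (Lmap m k (fun a => I (π a))) (ψ k)) p)
      = (-1:ℝ) ^ k * (m.choose k : ℝ) * (-(k : ℝ) * A k)
        - (-1:ℝ) ^ k * (m.choose k : ℝ) * (((m - k : ℕ) : ℝ) * B k) := by
    intro k hk
    simp only [h2 k hk, mul_sub]
    rw [Finset.sum_sub_distrib]
    have e1 : (∑ π : Equiv.Perm (Fin m), (-1:ℝ) ^ k * (m.choose k : ℝ) *
        (-(k : ℝ) * appD (Lmap m k (fun a => I (π a))) (ψ (k - 1)) p))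
        = (-1:ℝ) ^ k * (m.choose k : ℝ) * (-(k : ℝ) * A k) := by
      rw [hA, Finset.mul_sum, Finset.mul_sum]
    have e2 : (∑ π : Equiv.Perm (Fin m), (-1:ℝ) ^ k * (m.choose k : ℝ) *
        (∑ j : Fin m, if h : (j : ℕ) < k then (0:ℝ) else appD (Lmap m (k + 1)
          (fun a => I (π ((Equiv.swap j ⟨k, lt_of_le_of_lt (Nat.not_lt.1 h) j.isLt⟩) a))))
          (ψ k) p))
        = (-1:ℝ) ^ k * (m.choose k : ℝ) * (((m - k : ℕ) : ℝ) * B k) := by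
      rw [← h3 k (hkle k hk), Finset.mul_sum]
    rw [e1, e2]
  rw [Finset.sum_congr rfl h4, Finset.sum_sub_distrib]
  have hAB : ∀ k : ℕ, A (k + 1) = B k := fun k => rfl
  rw [Finset.sum_range_succ' (fun k => (-1:ℝ) ^ k * (m.choose k : ℝ) * (-(k : ℝ) * A k)) m]
  rw [Finset.sum_range_succ (fun k => (-1:ℝ) ^ k * (m.choose k : ℝ) * (((m - k : ℕ) : ℝ) * B k)) m]
  simp only [hAB, Nat.cast_zero, neg_zero, zero_mul, mul_zero, add_zero, Nat.sub_self,
    Nat.cast_ofNat, sub_zero]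
  rw [← Finset.sum_sub_distrib]
  apply Finset.sum_eq_zero
  intro k hk
  have hch : ((m.choose (k + 1) : ℝ)) * (((k + 1 : ℕ)) : ℝ)
      = (m.choose k : ℝ) * ((m - k : ℕ) : ℝ) := by
    exact_mod_cast congrArg (Nat.cast (R := ℝ)) (Nat.choose_succ_right_eq m k)
  push_cast at hch ⊢
  linear_combination ((-1:ℝ) ^ k * B k) * hch

lemma Dx_const_mul {f : EE n → ℝ} {p : EE n} (hf : DifferentiableAt ℝ f p) (c : ℝ) :
    Dx n (fun q => c * f q) p = c * Dx n f p := by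
  rw [Dx_eq, Dx_eq, Finset.mul_sum]
  refine Finset.sum_congr rfl fun r _ => ?_
  have : dop (Pi.single r 1, 0) (fun q => c * f q) p = c * dop (Pi.single r 1, 0) f p := by
    simp only [dop]
    rw [fderiv_const_mul hf c]
    simp
  rw [this]
  ring

lemma dop_dir_sum (f : EE n → ℝ) (p : EE n) (u : Fin n → ℝ) :
    ∑ r, u r * dop (Pi.single r 1, 0) f p = dop (u, 0) f p := by
  simp only [dop]
  rw [show ((u, (0 : Fin n → ℝ)) : EE n) = ∑ r, u r • ((Pi.single r 1, 0) : EE n) from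
    (sum_single_vec u).symm]
  rw [map_sum]
  refine Finset.sum_congr rfl fun x _ => ?_
  rw [map_smul]
  simp

lemma Dx_dir (f : EE n → ℝ) (p : EE n) : Dx n f p = fderiv ℝ f p (p.2, 0) := by
  rw [Dx_eq, dop_dir_sum]
  rfl

lemma homDeg_psi (m k : ℕ) (hk : k ≤ m) (ψk : EE n → ℝ)
    (hh : ∀ t : ℝ, t ≠ 0 → ∀ x ξ : Fin n → ℝ, ξ ≠ 0 →
      ψk (x, t • ξ) = (t ^ (m - k) / |t|) * ψk (x, ξ)) :
    HomDeg ((m : ℤ) - k) ψk := by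
  intro t ht p hp
  have h := hh t ht p.1 p.2 hp
  rw [show ((m : ℤ) - k) = ((m - k : ℕ) : ℤ) by omega, zpow_natCast]
  simpa using h

lemma hom0_term (m k : ℕ) (hk : k ≤ m) (ψk : EE n → ℝ) (hsm : ContDiffOn ℝ (⊤ : ℕ∞) ψk (Om n))
    (hh : HomDeg ((m : ℤ) - k) ψk) (J : Fin m → Fin n) :
    HomDeg 0 (appD (Lmap m k J) ψk) := by
  have h := homDeg_appD hsm hh (Lmap m k J)
  have he : (m : ℤ) - k - (((Lmap m k J).countP (fun o => !o.1)) : ℤ) = 0 := by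
    rw [Lmap_countP]
    omega
  rw [← he]
  exact h

end Stmt17Aux

open Stmt17Aux

/-- Statement 2.11: under the homogeneity `ψ^k(x,tξ) = (t^{m−k}/|t|) ψ^k(x,ξ)` and
`⟨ξ,∂ₓ⟩ψ^k = −k ψ^{k−1}`, the tensor `ψ_{i₁…i_m}` is homogeneous of degree `−1`
(with the sign convention), annihilated by `⟨ξ,∂ₓ⟩`, and translation invariant along
lines: `ψ_{i₁…i_m}(x+tξ,ξ) = ψ_{i₁…i_m}(x,ξ)`. -/
theorem stmt17 (n m : ℕ) (ψ : ℕ → (Fin n → ℝ) × (Fin n → ℝ) → ℝ)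
    (hsmooth : ∀ k ≤ m, ContDiffOn ℝ (⊤ : ℕ∞) (ψ k) {p | p.2 ≠ 0})
    (hhom : ∀ k ≤ m, ∀ (t : ℝ), t ≠ 0 → ∀ x ξ : Fin n → ℝ, ξ ≠ 0 →
      ψ k (x, t • ξ) = (t ^ (m - k) / |t|) * ψ k (x, ξ))
    (hDx : ∀ k ≤ m, ∀ x ξ : Fin n → ℝ, ξ ≠ 0 →
      Dx n (ψ k) (x, ξ) = -(k : ℝ) * ψ (k - 1) (x, ξ)) :
    ∀ (I : Fin m → Fin n) (x ξ : Fin n → ℝ), ξ ≠ 0 →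
      (∀ (t : ℝ), t ≠ 0 → psiTensor' n m ψ I (x, t • ξ) = |t|⁻¹ * psiTensor' n m ψ I (x, ξ))
        ∧ Dx n (psiTensor' n m ψ I) (x, ξ) = 0
        ∧ ∀ t : ℝ, psiTensor' n m ψ I (x + t • ξ, ξ) = psiTensor' n m ψ I (x, ξ) := by
  intro I x ξ hξ
  have hsm : ∀ k ≤ m, ContDiffOn ℝ (⊤ : ℕ∞) (ψ k) (Om n) := hsmooth
  have hkle : ∀ k ∈ Finset.range (m + 1), k ≤ m :=
    fun k hk => Nat.lt_succ_iff.1 (Finset.mem_range.1 hk)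
  set c : ℝ := ((m.factorial : ℝ))⁻¹ with hc
  set Φ : EE n → ℝ := fun p => ∑ π : Equiv.Perm (Fin m), ∑ k ∈ Finset.range (m + 1),
    (-1:ℝ) ^ k * (m.choose k : ℝ) * appD (Lmap m k (fun a => I (π a))) (ψ k) p with hΦ
  have hEq : ∀ p : EE n, psiTensor' n m ψ I p = c * (c * Φ p) := by
    intro p
    simp only [psiTensor', symAvg, hΦ, mixedD_eq_appD_Lmap, hc]
    rfl
  have hΦsm : ContDiffOn ℝ (⊤ : ℕ∞) Φ (Om n) :=
    ContDiffOn.sum fun π _ => ContDiffOn.sum fun k hk =>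
      contDiffOn_const.mul (contDiffOn_appD _ (hsm k (hkle k hk)))
  have hΦdiff : ∀ p ∈ Om n, DifferentiableAt ℝ Φ p := fun p hp => diffAt_of hΦsm hp
  have hψT_sm : ContDiffOn ℝ (⊤ : ℕ∞) (psiTensor' n m ψ I) (Om n) := by
    have h : psiTensor' n m ψ I = fun p => c * (c * Φ p) := funext hEq
    rw [h]
    exact contDiffOn_const.mul (contDiffOn_const.mul hΦsm)
  have hψDx' : ∀ k ≤ m, ∀ q ∈ Om n, Dx n (ψ k) q = -(k : ℝ) * ψ (k - 1) q := by
    intro k hk q hq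
    have := hDx k hk q.1 q.2 hq
    simpa using this
  have hDx0 : ∀ p ∈ Om n, Dx n (psiTensor' n m ψ I) p = 0 := by
    intro p hp
    have h1 : Dx n (psiTensor' n m ψ I) p = Dx n (fun q => c * (c * Φ q)) p := by
      congr 1
      exact funext hEq
    rw [h1, Dx_const_mul ((hΦdiff p hp).const_mul c) c, Dx_const_mul (hΦdiff p hp) c]
    rw [Dx_Phi m ψ I hsm hψDx' hp]
    ring
  have hΦhom : HomDeg 0 Φ := by
    intro t ht p hp
    have hterm : ∀ (π : Equiv.Perm (Fin m)) (k : ℕ), k ≤ m →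
        appD (Lmap m k (fun a => I (π a))) (ψ k) (p.1, t • p.2)
          = ((t:ℝ) ^ (0:ℤ) / |t|) * appD (Lmap m k (fun a => I (π a))) (ψ k) p :=
      fun π k hk => hom0_term m k hk (ψ k) (hsm k hk)
        (homDeg_psi m k hk (ψ k) (hhom k hk)) _ t ht p hp
    calc Φ (p.1, t • p.2)
        = ∑ π : Equiv.Perm (Fin m), ∑ k ∈ Finset.range (m + 1),
            (-1:ℝ) ^ k * (m.choose k : ℝ)
              * (((t:ℝ) ^ (0:ℤ) / |t|) * appD (Lmap m k (fun a => I (π a))) (ψ k) p) := by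
          rw [hΦ]
          exact Finset.sum_congr rfl fun π _ => Finset.sum_congr rfl fun k hk => by
            rw [hterm π k (hkle k hk)]
      _ = ((t:ℝ) ^ (0:ℤ) / |t|) * Φ p := by
          rw [hΦ, Finset.mul_sum]
          refine Finset.sum_congr rfl fun π _ => ?_
          rw [Finset.mul_sum]
          refine Finset.sum_congr rfl fun k _ => ?_
          ring
  refine ⟨?_, ?_, ?_⟩
  · intro t ht
    have hp : ((x, ξ) : EE n) ∈ Om n := hξ
    have h2 : Φ (x, t • ξ) = (t : ℝ) ^ (0:ℤ) / |t| * Φ (x, ξ) := hΦhom t ht (x, ξ) hp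
    rw [hEq (x, t • ξ), hEq (x, ξ), h2, zpow_zero]
    field_simp
  · exact hDx0 (x, ξ) hξ
  · intro t
    set ψT := psiTensor' n m ψ I with hψT
    have hdiffg : ∀ s : ℝ, HasDerivAt (fun r : ℝ => ψT (x + r • ξ, ξ)) 0 s := by
      intro s
      have hmem : ((x + s • ξ, ξ) : EE n) ∈ Om n := hξ
      have hγ : HasDerivAt (fun r : ℝ => ((x + r • ξ, ξ) : EE n)) ((ξ, 0) : EE n) s := by
        have h1 : HasDerivAt (fun r : ℝ => r • ((ξ, (0 : Fin n → ℝ)) : EE n))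
            ((ξ, 0) : EE n) s := by
          simpa using (hasDerivAt_id s).smul_const (((ξ, 0)) : EE n)
        have h2 := h1.const_add ((x, ξ) : EE n)
        have h3 : (fun r : ℝ => ((x, ξ) : EE n) + r • ((ξ, 0) : EE n))
            = fun r : ℝ => ((x + r • ξ, ξ) : EE n) := by
          funext r
          apply Prod.ext <;> simp
        rwa [h3] at h2
      have hfd : HasFDerivAt ψT (fderiv ℝ ψT (x + s • ξ, ξ)) (x + s • ξ, ξ) :=
        (diffAt_of hψT_sm hmem).hasFDerivAt
      have hcomp := hfd.comp_hasDerivAt s hγ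
      have hval : fderiv ℝ ψT (x + s • ξ, ξ) ((ξ, 0) : EE n) = 0 := by
        have hd : fderiv ℝ ψT (x + s • ξ, ξ) ((ξ, 0) : EE n)
            = Dx n ψT (x + s • ξ, ξ) := (Dx_dir ψT ((x + s • ξ, ξ) : EE n)).symm
        rw [hd]
        exact hDx0 (x + s • ξ, ξ) hmem
      rw [hval] at hcomp
      exact hcomp
    have hg := is_const_of_deriv_eq_zero (𝕜 := ℝ)
      (fun s => (hdiffg s).differentiableAt) (fun s => (hdiffg s).deriv) t 0
    simpa using hg
end

section
/- Let f = (f_{i₁…i_m}) ∈ 𝒮(ℝ²; S^mℝ²) be a rank m symmetric Schwartz tensor field on the plane with complex coordinates f̃_j defined via f = Σ_j f̃_j dz^{m−j} dz̄^j, and define the complex integral momenta μ̃_j^{αβ} = ∫_ℂ z^α z̄^β f̃_j(z) dσ(z). Then for all nonnegative integers r and 0 ≤ k ≤ m, the moment ∫_{−∞}^{∞} p^r (I^k f)(i p ζ, ζ) dp equals (i^r/2^{r+k}) Σ_{j=0}^{m} Σ_{α=0}^{r} Σ_{β=0}^{k} (−1)^α C(r,α) C(k,β) μ̃_j^{α+β,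 r+k−α−β} ζ^{m+r+k−j−α−β} ζ̄^{j+α+β} for every ζ ∈ ℂ with |ζ|=1; in particular it is the restriction to the unit circle of a homogeneous polynomial of degree r+k+m in (ζ,ζ̄). -/
/-!
The substitution `z = ζ (t + i p)` is a rotation of the `(t, p)`-plane onto `ℂ`, so the `p`-moment
of the ray transform becomes `∫_ℂ (Im (z ζ̄))^r (Re (z ζ̄))^k ⟨f(z), ζ^m⟩ dσ(z)`. Writing
`Im w = (w̄ - w) i / 2` and `Re w = (w + w̄) / 2` for `w = z ζ̄` and expanding both powers
binomially turns this integrand into a combination of `z^a z̄^b f̃_j(z)`, whose integrals are the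
momenta `μ̃_j^{ab}`.
-/

open MeasureTheory Complex

/-- The `k`-th momentum ray transform on the plane, written in complex coordinates
(formula (3.4)): `(I^k f)(z,ζ) = ∫ t^k Σ_j f̃_j(z+tζ) ζ^{m−j} ζ̄^j dt`,
where `f̃_j` are the complex coordinates of a rank-`m` symmetric tensor field. -/
noncomputable def IkC (m k : ℕ) (ft : Fin (m + 1) → SchwartzMap ℂ ℂ) (z ζ : ℂ) : ℂ :=
  ∫ t : ℝ, (t : ℂ) ^ k *
    ∑ j : Fin (m + 1), ft j (z + t * ζ) * ζ ^ (m - (j : ℕ)) * (starRingEnd ℂ ζ) ^ (j : ℕ)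

/-- The complex integral momenta `μ̃_j^{αβ} = ∫_ℂ z^α z̄^β f̃_j(z) dσ(z)`. -/
noncomputable def muC (m : ℕ) (ft : Fin (m + 1) → SchwartzMap ℂ ℂ)
    (α β : ℕ) (j : Fin (m + 1)) : ℂ :=
  ∫ z : ℂ, z ^ α * (starRingEnd ℂ z) ^ β * ft j z

open Finset ComplexConjugate

theorem ofReal_im_pow_eq_sum (w : ℂ) (r : ℕ) :
    (w.im : ℂ) ^ r = I ^ r / 2 ^ r *
      ∑ α ∈ range (r + 1), (-1) ^ α * (r.choose α : ℂ) * w ^ α * conj w ^ (r - α) := by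
  have him : (w.im : ℂ) = I / 2 * (-w + conj w) := Complex.ext (by simp; ring) (by simp)
  rw [him, mul_pow, div_pow, add_pow]
  congr 1
  refine sum_congr rfl fun α _ => ?_
  rw [neg_pow]
  ring

theorem ofReal_re_pow_eq_sum (w : ℂ) (k : ℕ) :
    (w.re : ℂ) ^ k = 1 / 2 ^ k *
      ∑ β ∈ range (k + 1), (k.choose β : ℂ) * w ^ β * conj w ^ (k - β) := by
  rw [re_eq_add_conj, div_pow, add_pow, one_div, inv_mul_eq_div]
  congr 1
  refine sum_congr rfl fun β _ => ?_
  ring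

theorem ofReal_im_pow_mul_ofReal_re_pow (w : ℂ) (r k : ℕ) :
    (w.im : ℂ) ^ r * (w.re : ℂ) ^ k = I ^ r / 2 ^ (r + k) *
      ∑ α ∈ range (r + 1), ∑ β ∈ range (k + 1),
        (-1) ^ α * (r.choose α : ℂ) * (k.choose β : ℂ) * w ^ (α + β) *
          conj w ^ (r + k - α - β) := by
  rw [ofReal_im_pow_eq_sum, ofReal_re_pow_eq_sum, mul_mul_mul_comm, sum_mul_sum, pow_add,
    div_mul_div_comm, mul_one]
  congr 1
  refine sum_congr rfl fun α hα => sum_congr rfl fun β hβ => ?_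
  rw [show r + k - α - β = (r - α) + (k - β) by grind]
  ring

theorem ofReal_im_pow_mul_ofReal_re_pow_mul_sum (r k : ℕ) {m : ℕ} (a : Fin (m + 1) → ℂ)
    (z ζ : ℂ) :
    ((z * conj ζ).im : ℂ) ^ r * ((z * conj ζ).re : ℂ) ^ k *
        ∑ j : Fin (m + 1), a j * ζ ^ (m - (j : ℕ)) * conj ζ ^ (j : ℕ) =
      I ^ r / 2 ^ (r + k) * ∑ j : Fin (m + 1), ∑ α ∈ range (r + 1), ∑ β ∈ range (k + 1),
        (-1) ^ α * (r.choose α : ℂ) * (k.choose β : ℂ) *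
          (z ^ (α + β) * conj z ^ (r + k - α - β) * a j) *
          ζ ^ (m + r + k - (j : ℕ) - α - β) * conj ζ ^ ((j : ℕ) + α + β) := by
  rw [ofReal_im_pow_mul_ofReal_re_pow, mul_assoc, sum_mul_sum, sum_comm]
  congr 1
  refine sum_congr rfl fun j _ => sum_congr rfl fun α hα => ?_
  rw [sum_mul]
  refine sum_congr rfl fun β hβ => ?_
  rw [show m + r + k - j - α - β = (m - j) + (r + k - α - β) by grind]
  simp only [map_mul, conj_conj, mul_pow, pow_add]
  ring

theorem integrable_pow_mul_conj_pow_mul (f : SchwartzMap ℂ ℂ) (a b : ℕ) :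
    Integrable (fun z : ℂ => z ^ a * conj z ^ b * f z) := by
  refine (f.integrable_pow_mul volume (a + b)).mono (by fun_prop)
    (Filter.Eventually.of_forall fun z => ?_)
  rw [norm_mul, norm_mul, norm_pow, norm_pow, RCLike.norm_conj, ← pow_add]
  exact Real.le_norm_self _

theorem integral_integral_mul_ofReal_add_ofReal_mul_I {E : Type*} [NormedAddCommGroup E]
    [NormedSpace ℝ E] {ζ : ℂ} (hζ : ‖ζ‖ = 1) {G : ℂ → E} (hG : Integrable G) :
    ∫ p : ℝ, ∫ t : ℝ, G (ζ * (t + p * I)) = ∫ z, G z := by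
  let c : Circle := ⟨ζ, mem_sphere_zero_iff_norm.2 hζ⟩
  have hΦ : MeasurePreserving (fun q : ℝ × ℝ => ζ * (q.1 + q.2 * I))
      (volume.prod volume) volume := by
    simpa [Function.comp_def, ← Measure.volume_eq_prod, mk_eq_add_mul_I] using
      (rotation c).measurePreserving.comp volume_preserving_equiv_real_prod.symm
  have hemb : MeasurableEmbedding (fun q : ℝ × ℝ => ζ * (q.1 + q.2 * I)) := by
    simpa [Function.comp_def, mk_eq_add_mul_I] using
      (rotation c).toHomeomorph.measurableEmbedding.comp
        measurableEquivRealProd.symm.measurableEmbedding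
  rw [← hΦ.integral_comp hemb]
  exact (integral_prod_symm _ ((hΦ.integrable_comp_emb hemb).2 hG)).symm

section
variable (m k r : ℕ) (ft : Fin (m + 1) → SchwartzMap ℂ ℂ) (ζ : ℂ)

theorem integrable_im_pow_mul_re_pow_mul_sum :
    Integrable (fun z : ℂ => ((z * conj ζ).im : ℂ) ^ r * ((z * conj ζ).re : ℂ) ^ k *
      ∑ j : Fin (m + 1), ft j z * ζ ^ (m - (j : ℕ)) * conj ζ ^ (j : ℕ)) := by
  simp_rw [ofReal_im_pow_mul_ofReal_re_pow_mul_sum]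
  refine (integrable_finsetSum _ fun j _ => integrable_finsetSum _ fun α _ =>
    integrable_finsetSum _ fun β _ => ?_).const_mul _
  exact (((integrable_pow_mul_conj_pow_mul (ft j) _ _).const_mul _).mul_const _).mul_const _

theorem integral_im_pow_mul_re_pow_mul_sum :
    ∫ z : ℂ, ((z * conj ζ).im : ℂ) ^ r * ((z * conj ζ).re : ℂ) ^ k *
        ∑ j : Fin (m + 1), ft j z * ζ ^ (m - (j : ℕ)) * conj ζ ^ (j : ℕ) =
      I ^ r / 2 ^ (r + k) * ∑ j : Fin (m + 1), ∑ α ∈ range (r + 1), ∑ β ∈ range (k + 1),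
        (-1) ^ α * (r.choose α : ℂ) * (k.choose β : ℂ) * muC m ft (α + β) (r + k - α - β) j *
          ζ ^ (m + r + k - (j : ℕ) - α - β) * conj ζ ^ ((j : ℕ) + α + β) := by
  have hterm (j : Fin (m + 1)) (α β : ℕ) : Integrable fun z : ℂ =>
      (-1) ^ α * (r.choose α : ℂ) * (k.choose β : ℂ) *
        (z ^ (α + β) * conj z ^ (r + k - α - β) * ft j z) *
        ζ ^ (m + r + k - (j : ℕ) - α - β) * conj ζ ^ ((j : ℕ) + α + β) :=
    (((integrable_pow_mul_conj_pow_mul (ft j) _ _).const_mul _).mul_const _).mul_const _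
  simp_rw [ofReal_im_pow_mul_ofReal_re_pow_mul_sum]
  rw [integral_const_mul, integral_finsetSum _ fun j _ => integrable_finsetSum _ fun α _ =>
    integrable_finsetSum _ fun β _ => hterm j α β]
  congr 1
  refine sum_congr rfl fun j _ => ?_
  rw [integral_finsetSum _ fun α _ => integrable_finsetSum _ fun β _ => hterm j α β]
  refine sum_congr rfl fun α _ => ?_
  rw [integral_finsetSum _ fun β _ => hterm j α β]
  refine sum_congr rfl fun β _ => ?_
  rw [integral_mul_const, integral_mul_const, integral_const_mul, muC]

end

theorem integral_ofReal_pow_mul_IkC (m k r : ℕ) (ft : Fin (m + 1) → SchwartzMap ℂ ℂ) {ζ : ℂ}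
    (hζ : ‖ζ‖ = 1) :
    ∫ p : ℝ, (p : ℂ) ^ r * IkC m k ft (I * p * ζ) ζ =
      ∫ z : ℂ, ((z * conj ζ).im : ℂ) ^ r * ((z * conj ζ).re : ℂ) ^ k *
        ∑ j : Fin (m + 1), ft j z * ζ ^ (m - (j : ℕ)) * conj ζ ^ (j : ℕ) := by
  rw [← integral_integral_mul_ofReal_add_ofReal_mul_I hζ
    (integrable_im_pow_mul_re_pow_mul_sum m k r ft ζ)]
  refine integral_congr_ae (Filter.Eventually.of_forall fun p => ?_)
  dsimp only
  rw [IkC, ← integral_const_mul]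
  congr 1 with t
  have hrot : ζ * (t + p * I) * conj ζ = t + p * I := by
    rw [mul_right_comm, mul_conj, normSq_eq_norm_sq, hζ]
    simp
  rw [hrot, show I * p * ζ + t * ζ = ζ * (t + p * I) by ring]
  simp only [add_re, add_im, ofReal_re, ofReal_im, mul_re, mul_im, I_re, I_im, mul_zero, mul_one,
    sub_self, add_zero, zero_add]
  ring

theorem stmt18_general (m k r : ℕ) (ft : Fin (m + 1) → SchwartzMap ℂ ℂ)
    (ζ : ℂ) (hζ : ‖ζ‖ = 1) :
    (∫ p : ℝ, (p : ℂ) ^ r * IkC m k ft (Complex.I * p * ζ) ζ)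
      = (Complex.I ^ r / 2 ^ (r + k)) *
          ∑ j : Fin (m + 1), ∑ α ∈ Finset.range (r + 1), ∑ β ∈ Finset.range (k + 1),
            (-1 : ℂ) ^ α * (r.choose α : ℂ) * (k.choose β : ℂ) *
              muC m ft (α + β) (r + k - α - β) j *
              ζ ^ (m + r + k - (j : ℕ) - α - β) *
              (starRingEnd ℂ ζ) ^ ((j : ℕ) + α + β) := by
  rw [integral_ofReal_pow_mul_IkC m k r ft hζ, integral_im_pow_mul_re_pow_mul_sum]

/-- Necessity part of Theorem 4.1: the `r`-th moment of `(I^k f)(ipζ,ζ)` in `p` is the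
restriction to the unit circle of an explicit homogeneous polynomial of degree
`r+k+m` in `(ζ,ζ̄)` whose coefficients are the complex integral momenta. -/
theorem stmt18 (m k r : ℕ) (hk : k ≤ m) (ft : Fin (m + 1) → SchwartzMap ℂ ℂ)
    (ζ : ℂ) (hζ : ‖ζ‖ = 1) :
    (∫ p : ℝ, (p : ℂ) ^ r * IkC m k ft (Complex.I * p * ζ) ζ)
      = (Complex.I ^ r / 2 ^ (r + k)) *
          ∑ j : Fin (m + 1), ∑ α ∈ Finset.range (r + 1), ∑ β ∈ Finset.range (k + 1),
            (-1 : ℂ) ^ α * (r.choose α : ℂ) * (k.choose β : ℂ) *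
              muC m ft (α + β) (r + k - α - β) j *
              ζ ^ (m + r + k - (j : ℕ) - α - β) *
              (starRingEnd ℂ ζ) ^ ((j : ℕ) + α + β) :=
  stmt18_general m k r ft ζ hζ
end
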